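/- (Theorem 3.3) Let L be a non-metabelian graded Lie algebra of maximal class over a field F of prime characteristic p, with setup elements x, y, first constituent length ℓ = 2q where q is a power of p, and constituent lengths ℓ = ℓ_1, ℓ_2, ℓ_3, … as in the recursive definition. Then every constituent length ℓ_r equals either 2q, or 2q − p^s for some integer s ≥ 0 with p^s ≤ q. -/

import Mathlib

/-!
Fix `r ≥ 1`, write `v = v_r` and `ℓ' = ℓ_{r+1}`. As `v` is homogeneous and the next
homogeneous component is one-dimensional, `[v x] = c [v y]`. Hence in the expansion
`[s, [y x^n]] = ∑ (-1)^i C(n,i) [s x^i y x^(n-i)]`, for `s` inside the `r`-th constituent with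
`[s x^k] = v`, only the term `i = k` survives as long as `n - k < ℓ'`.
With `s = v` and `[y x^ℓ] = 0` this gives `ℓ' ≤ ℓ = 2q`. With `1 ≤ k < ℓ_r` and `ℓ' + k < 2q`,
`y` commutes with `s` and with `[y x^(ℓ'-1+k)]`, so the Jacobi identity forces
`p ∣ C(ℓ' - 1 + k, k)`. By Lucas's theorem, `C(a + p^e, p^e) ≢ 0 (mod p)` when
`p^e ∥ a + 1`, so these divisibilities for all `k < min(2q - ℓ', q)` (note `ℓ_r ≥ q` by
induction) make `p^⌈log_p min(2q - ℓ', q)⌉` divide `ℓ'`, leaving only `ℓ' = 2q - p^s`.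
-/

/-- Left-normed bracket of `a` with `n` copies of `b`:
`lnb a b n = [a b … b]` with `n` occurrences of `b`. -/
def lnb {L : Type*} [LieRing L] (a b : L) : ℕ → L
  | 0 => a
  | n + 1 => ⁅lnb a b n, b⁆

/-- `Lc` is a grading of `L` (indexed by `ℕ`, with trivial component in degree `0`)
making `L` an (infinite-dimensional) graded Lie algebra of maximal class:
`L` is the internal direct sum of the `Lc i`, `⁅Lc i, Lc j⁆ ⊆ Lc (i+j)`,
`dim (Lc 1) = 2`, `dim (Lc i) = 1` for `i ≥ 2`, and
`Lc (i+1) = span {⁅u, w⁆ : u ∈ Lc i, w ∈ Lc 1}` for `i ≥ 1`. -/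
structure IsMaxClassGrading (F : Type*) [Field F] (L : Type*) [LieRing L] [LieAlgebra F L]
    (Lc : ℕ → Submodule F L) : Prop where
  zero : Lc 0 = ⊥
  internal : DirectSum.IsInternal Lc
  bracket_mem : ∀ i j : ℕ, ∀ u ∈ Lc i, ∀ w ∈ Lc j, ⁅u, w⁆ ∈ Lc (i + j)
  dim_one : Module.finrank F (Lc 1) = 2
  dim_rest : ∀ i : ℕ, 2 ≤ i → Module.finrank F (Lc i) = 1
  gen : ∀ i : ℕ, 1 ≤ i →
    Lc (i + 1) = Submodule.span F {z | ∃ u ∈ Lc i, ∃ w ∈ Lc 1, z = ⁅u, w⁆}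

/-- The standard setup for a non-metabelian graded Lie algebra of maximal class:
`y ∈ L_1` is nonzero and centralizes `L_2`, `x ∈ L_1` is not a scalar multiple of `y`,
the first constituent length `ℓ` is positive with `[y x^i y] = 0` for `0 ≤ i < ℓ−1` and
`[y x^{ℓ−1} y] ≠ 0`, and `x` is normalized so that `[y x^ℓ] = 0`. -/
structure MaxClassSetup {F : Type*} [Field F] {L : Type*} [LieRing L] [LieAlgebra F L]
    (Lc : ℕ → Submodule F L) (x y : L) (ℓ : ℕ) : Prop where
  y_mem : y ∈ Lc 1
  y_ne : y ≠ 0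
  y_central : ∀ u ∈ Lc 2, ⁅u, y⁆ = 0
  x_mem : x ∈ Lc 1
  x_not_mul : ∀ c : F, x ≠ c • y
  ell_pos : 0 < ℓ
  first_const : ∀ i : ℕ, i < ℓ - 1 → ⁅lnb y x i, y⁆ = 0
  first_const_ne : ⁅lnb y x (ℓ - 1), y⁆ ≠ 0
  normalized : lnb y x ℓ = 0

/-- The sequences `(ℓ_r)_{r≥1}` of constituent lengths and `(v_r)_{r≥1}` of
distinguished homogeneous elements: `ℓ_1 = ℓ`, `v_1 = [y x^{ℓ−1}]`, and for `r ≥ 2`,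
`ℓ_r > 0`, `[v_{r−1} y x^i y] = 0` for `0 ≤ i < ℓ_r − 1`,
`v_r = [v_{r−1} y x^{ℓ_r − 1}]`, and `[v_r y] ≠ 0`. -/
structure ConstituentSeq {L : Type*} [LieRing L]
    (x y : L) (ℓ : ℕ) (l : ℕ → ℕ) (v : ℕ → L) : Prop where
  l_one : l 1 = ℓ
  v_one : v 1 = lnb y x (ℓ - 1)
  l_pos : ∀ r : ℕ, 2 ≤ r → 0 < l r
  const : ∀ r : ℕ, 2 ≤ r → ∀ i : ℕ, i < l r - 1 → ⁅lnb ⁅v (r - 1), y⁆ x i, y⁆ = 0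
  v_def : ∀ r : ℕ, 2 ≤ r → v r = lnb ⁅v (r - 1), y⁆ x (l r - 1)
  const_end : ∀ r : ℕ, 2 ≤ r → ⁅v r, y⁆ ≠ 0

open Finset

section LieRing

variable {L : Type*} [LieRing L]

@[simp]
lemma lnb_zero (a b : L) : lnb a b 0 = a := rfl

lemma lnb_succ (a b : L) (n : ℕ) : lnb a b (n + 1) = ⁅lnb a b n, b⁆ := rfl

@[simp]
lemma lnb_zero_left (b : L) (n : ℕ) : lnb 0 b n = 0 := by
  induction n with
  | zero => rfl
  | succ n ih => rw [lnb_succ, ih, zero_lie]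

lemma lnb_add (a b : L) (m n : ℕ) : lnb a b (m + n) = lnb (lnb a b m) b n := by
  induction n with
  | zero => rfl
  | succ n ih => rw [← add_assoc, lnb_succ, ih, lnb_succ]

lemma lnb_succ' (a b : L) (n : ℕ) : lnb a b (n + 1) = lnb ⁅a, b⁆ b n := by
  rw [add_comm, lnb_add]; rfl

theorem lie_lnb_eq_sum (s x y : L) (n : ℕ) :
    ⁅s, lnb y x n⁆ = ∑ ij ∈ antidiagonal n,
      n.choose ij.1 • (-1 : ℤ) ^ ij.1 • lnb ⁅lnb s x ij.1, y⁆ x ij.2 := by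
  induction n generalizing s with
  | zero => simp
  | succ n ih =>
    rw [sum_antidiagonal_choose_succ_nsmul
      (fun i j ↦ (-1 : ℤ) ^ i • lnb ⁅lnb s x i, y⁆ x j) n]
    have h₁ : ∀ ij ∈ antidiagonal n,
        n.choose ij.1 • (-1 : ℤ) ^ ij.1 • lnb ⁅lnb s x ij.1, y⁆ x (ij.2 + 1) =
          ⁅n.choose ij.1 • (-1 : ℤ) ^ ij.1 • lnb ⁅lnb s x ij.1, y⁆ x ij.2, x⁆ := by
      intro ij _
      rw [lnb_succ, nsmul_lie, zsmul_lie]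
    have h₂ : ∀ ij ∈ antidiagonal n,
        n.choose ij.2 • (-1 : ℤ) ^ (ij.1 + 1) • lnb ⁅lnb s x (ij.1 + 1), y⁆ x ij.2 =
          -(n.choose ij.1 • (-1 : ℤ) ^ ij.1 • lnb ⁅lnb ⁅s, x⁆ x ij.1, y⁆ x ij.2) := by
      rintro ⟨i, j⟩ hij
      rw [HasAntidiagonal.mem_antidiagonal] at hij
      dsimp only
      rw [Nat.choose_symm_of_eq_add hij.symm, lnb_succ', pow_succ, mul_neg_one, neg_smul, smul_neg]
    rw [sum_congr rfl h₁, sum_congr rfl h₂, sum_neg_distrib, ← sum_lie, ← ih, ← ih, lnb_succ,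
      leibniz_lie, ← lie_skew ⁅s, x⁆]
    abel

end LieRing

section LieAlgebra

variable {R L : Type*} [CommRing R] [LieRing L] [LieAlgebra R L]

lemma lnb_smul (c : R) (a b : L) (n : ℕ) : lnb (c • a) b n = c • lnb a b n := by
  induction n with
  | zero => rfl
  | succ n ih => rw [lnb_succ, ih, smul_lie, lnb_succ]

lemma lnb_succ_eq_smul {v x y : L} {c : R} (hvx : ⁅v, x⁆ = c • ⁅v, y⁆) (n : ℕ) :
    lnb v x (n + 1) = c • lnb ⁅v, y⁆ x n := by
  rw [lnb_succ', hvx, lnb_smul]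

theorem lie_lnb_eq_single {s x y v : L} {c : R} {k N n : ℕ}
    (hvx : ⁅v, x⁆ = c • ⁅v, y⁆) (hv : ∀ j < N, ⁅lnb ⁅v, y⁆ x j, y⁆ = 0)
    (hs : ∀ i < k, ⁅lnb s x i, y⁆ = 0) (hsv : lnb s x k = v) (hkn : k ≤ n) (hnN : n ≤ k + N) :
    ⁅s, lnb y x n⁆ = ((-1 : ℤ) ^ k * n.choose k) • lnb ⁅v, y⁆ x (n - k) := by
  have hvanish : ∀ i ≤ n, i ≠ k → ⁅lnb s x i, y⁆ = 0 := by
    intro i hin hik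
    rcases lt_or_gt_of_ne hik with hlt | hgt
    · exact hs i hlt
    obtain ⟨j, rfl⟩ := Nat.exists_eq_add_of_lt hgt
    rw [add_assoc, lnb_add, hsv, lnb_succ_eq_smul hvx, smul_lie, hv j (by omega), smul_zero]
  rw [lie_lnb_eq_sum, sum_eq_single (k, n - k)]
  · rw [hsv, mul_comm, mul_smul, natCast_zsmul]
  · rintro ⟨i, j⟩ hij hne
    rw [HasAntidiagonal.mem_antidiagonal] at hij
    rw [hvanish i (by omega) fun hik => hne (Prod.ext hik (by dsimp only; omega)),
      lnb_zero_left, smul_zero, smul_zero]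
  · intro hk
    exact absurd (HasAntidiagonal.mem_antidiagonal.2 (Nat.add_sub_cancel' hkn)) hk

theorem lnb_lie_eq_zero_of_lnb_eq_zero {x y v : L} {c : R} {N n : ℕ}
    (hvx : ⁅v, x⁆ = c • ⁅v, y⁆) (hv : ∀ j < N, ⁅lnb ⁅v, y⁆ x j, y⁆ = 0)
    (hy : lnb y x n = 0) (hnN : n ≤ N) : lnb ⁅v, y⁆ x n = 0 := by
  have := lie_lnb_eq_single (s := v) (k := 0) hvx hv (by simp) rfl n.zero_le (by omega)
  simpa [hy] using this.symm

end LieAlgebra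

section Field

variable {F L : Type*} [Field F] [LieRing L] [LieAlgebra F L]

theorem choose_eq_zero_of_lie_lnb_eq_zero {s x y v : L} {c : F} {k N : ℕ}
    (hvx : ⁅v, x⁆ = c • ⁅v, y⁆) (hv : ∀ j < N, ⁅lnb ⁅v, y⁆ x j, y⁆ = 0)
    (hvN : ⁅lnb ⁅v, y⁆ x N, y⁆ ≠ 0) (hs : ∀ i < k, ⁅lnb s x i, y⁆ = 0) (hsv : lnb s x k = v)
    (hk : 0 < k) (hy : ⁅lnb y x (N + k), y⁆ = 0) : ((N + k).choose k : F) = 0 := by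
  have hzero : ⁅⁅s, lnb y x (N + k)⁆, y⁆ = 0 := by
    have hsy : ⁅s, y⁆ = 0 := hs 0 hk
    rw [lie_lie, hy, lie_zero, hsy, lie_zero, sub_zero]
  rw [lie_lnb_eq_single hvx hv hs hsv (by omega) (by omega), Nat.add_sub_cancel, zsmul_lie,
    ← Int.cast_smul_eq_zsmul F, smul_eq_zero] at hzero
  have hcoef := hzero.resolve_right hvN
  push_cast at hcoef
  exact (mul_eq_zero.1 hcoef).resolve_left (pow_ne_zero _ (neg_ne_zero.2 one_ne_zero))

end Field

theorem choose_pow_mul_add_pred_modEq {p : ℕ} [Fact p.Prime] (f b : ℕ) :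
    (p ^ f * b + (p ^ f - 1)).choose (p ^ f) ≡ b [ZMOD p] := by
  have hp : 0 < p := (Fact.out : p.Prime).pos
  have hpf : 0 < p ^ f := pow_pos hp f
  have hdiv : (p ^ f * b + (p ^ f - 1)) / p ^ f = b := by
    rw [Nat.mul_add_div hpf, Nat.div_eq_of_lt (Nat.sub_lt hpf one_pos), add_zero]
  have hdigit : ∀ i ∈ range f,
      ((p ^ f * b + (p ^ f - 1)) / p ^ i % p).choose (p ^ f / p ^ i % p) = 1 := by
    intro i hi
    obtain ⟨j, hj⟩ := Nat.exists_eq_add_of_lt (mem_range.1 hi)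
    have hsplit : p ^ f = p ^ i * (p ^ j * p) := by rw [hj, ← pow_succ, ← pow_add, add_assoc]
    rw [hsplit, Nat.mul_div_cancel_left _ (pow_pos hp i), Nat.mul_mod_left, Nat.choose_zero_right]
  refine (Choose.choose_modEq_choose_mul_prod_range_choose f).trans ?_
  rw [hdiv, Nat.div_self hpf, Nat.choose_one_right, prod_eq_one hdigit, Nat.cast_one, mul_one]

theorem pow_clog_dvd_succ_of_dvd_choose {p a T : ℕ} (hp : p.Prime)
    (h : ∀ k, 0 < k → k < T → p ∣ (a + k).choose k) : p ^ Nat.clog p T ∣ a + 1 := by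
  have := Fact.mk hp
  obtain ⟨e, b, hb, hab⟩ := Nat.exists_eq_pow_mul_and_not_dvd a.add_one_ne_zero p hp.ne_one
  by_contra hnd
  have heT : p ^ e < T := by
    refine Nat.pow_lt_of_lt_clog (lt_of_not_ge fun hle => hnd ?_)
    rw [hab]
    exact (pow_dvd_pow p hle).mul_right b
  have hpe : 0 < p ^ e := pow_pos hp.pos e
  have ha : a + p ^ e = p ^ e * b + (p ^ e - 1) := by rw [← hab]; omega
  have hdvd := h (p ^ e) hpe heT
  rw [ha, ← Int.natCast_dvd_natCast, (choose_pow_mul_add_pred_modEq e b).dvd_iff,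
    Int.natCast_dvd_natCast] at hdvd
  exact hb hdvd

theorem eq_two_mul_or_eq_two_mul_sub_pow_of_dvd_choose {p m q n : ℕ} (hp : p.Prime)
    (hq : q = p ^ m) (hn : 0 < n) (hnq : n ≤ 2 * q)
    (h : ∀ k, 0 < k → n + k < 2 * q → k < q → p ∣ (n - 1 + k).choose k) :
    n = 2 * q ∨ ∃ s, p ^ s ≤ q ∧ n = 2 * q - p ^ s := by
  set t := 2 * q - n with ht
  have key : p ^ Nat.clog p (min t q) ∣ n := by
    have := pow_clog_dvd_succ_of_dvd_choose (a := n - 1) (T := min t q) hp fun k hk hkT =>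
      h k hk (by omega) (by omega)
    rwa [Nat.sub_add_cancel hn] at this
  rcases lt_or_ge t q with htq | hqt
  · rw [min_eq_left htq.le] at key
    rcases Nat.eq_zero_or_pos t with ht0 | htpos
    · exact Or.inl (by omega)
    set e := Nat.clog p t
    have hem : e ≤ m := by
      have := Nat.clog_mono_right p htq.le
      rwa [hq, Nat.clog_pow p m hp.one_lt] at this
    have hdvd : p ^ e ∣ t := Nat.dvd_sub (((pow_dvd_pow p hem).trans hq.symm.dvd).mul_left 2) key
    have hte : t = p ^ e :=
      le_antisymm (Nat.le_pow_clog hp.one_lt t) (Nat.le_of_dvd htpos hdvd)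
    exact Or.inr ⟨e, by omega, by omega⟩
  · rw [min_eq_right hqt, hq, Nat.clog_pow p m hp.one_lt, ← hq] at key
    have := Nat.le_of_dvd hn key
    exact Or.inr ⟨m, hq.ge, by omega⟩

namespace IsMaxClassGrading

variable {F L : Type*} [Field F] [LieRing L] [LieAlgebra F L] {Lc : ℕ → Submodule F L}

lemma lnb_mem (hL : IsMaxClassGrading F L Lc) {a b : L} {i : ℕ} (ha : a ∈ Lc i)
    (hb : b ∈ Lc 1) (n : ℕ) : lnb a b n ∈ Lc (i + n) := by
  induction n with
  | zero => exact ha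
  | succ n ih => exact hL.bracket_mem _ 1 _ ih b hb

lemma exists_lie_eq_smul_lie (hL : IsMaxClassGrading F L Lc) {v x y : L} {d : ℕ} (hd : 1 ≤ d)
    (hv : v ∈ Lc d) (hx : x ∈ Lc 1) (hy : y ∈ Lc 1) (hvy : ⁅v, y⁆ ≠ 0) :
    ∃ c : F, ⁅v, x⁆ = c • ⁅v, y⁆ := by
  have hvy' : (⟨⁅v, y⁆, hL.bracket_mem d 1 v hv y hy⟩ : Lc (d + 1)) ≠ 0 :=
    fun h => hvy (congrArg Subtype.val h)
  obtain ⟨c, hc⟩ := (finrank_eq_one_iff_of_nonzero' _ hvy').1 (hL.dim_rest (d + 1) (by omega))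
    ⟨⁅v, x⁆, hL.bracket_mem d 1 v hv x hx⟩
  exact ⟨c, (congrArg Subtype.val hc).symm⟩

end IsMaxClassGrading

namespace ConstituentSeq

variable {F L : Type*} [Field F] [LieRing L] [LieAlgebra F L] {Lc : ℕ → Submodule F L}
  {x y : L} {ℓ : ℕ} {l : ℕ → ℕ} {v : ℕ → L}

lemma lie_ne_zero (hseq : ConstituentSeq x y ℓ l v) (hsetup : MaxClassSetup Lc x y ℓ) {r : ℕ}
    (hr : 1 ≤ r) : ⁅v r, y⁆ ≠ 0 := by
  rcases hr.eq_or_lt with rfl | hr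
  · exact hseq.v_one ▸ hsetup.first_const_ne
  · exact hseq.const_end r hr

lemma lie_lnb_lie_eq_zero (hseq : ConstituentSeq x y ℓ l v) {r : ℕ} (hr : 1 ≤ r) :
    ∀ j < l (r + 1) - 1, ⁅lnb ⁅v r, y⁆ x j, y⁆ = 0 :=
  hseq.const (r + 1) (by omega)

lemma lie_lnb_lie_ne_zero (hseq : ConstituentSeq x y ℓ l v) {r : ℕ} (hr : 1 ≤ r) :
    ⁅lnb ⁅v r, y⁆ x (l (r + 1) - 1), y⁆ ≠ 0 :=
  hseq.v_def (r + 1) (by omega) ▸ hseq.const_end (r + 1) (by omega)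

lemma exists_mem (hseq : ConstituentSeq x y ℓ l v) (hL : IsMaxClassGrading F L Lc)
    (hsetup : MaxClassSetup Lc x y ℓ) {r : ℕ} (hr : 1 ≤ r) : ∃ d, 1 ≤ d ∧ v r ∈ Lc d := by
  induction r, hr using Nat.le_induction with
  | base => exact ⟨1 + (ℓ - 1), by omega, hseq.v_one ▸ hL.lnb_mem hsetup.y_mem hsetup.x_mem _⟩
  | succ r _ ih =>
    obtain ⟨d, hd, hv⟩ := ih
    refine ⟨d + 1 + (l (r + 1) - 1), by omega, ?_⟩
    rw [hseq.v_def (r + 1) (by omega)]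
    exact hL.lnb_mem (hL.bracket_mem d 1 _ hv y hsetup.y_mem) hsetup.x_mem _

lemma exists_lnb_eq (hseq : ConstituentSeq x y ℓ l v) (hsetup : MaxClassSetup Lc x y ℓ)
    {r : ℕ} (hr : 1 ≤ r) :
    ∃ u, v r = lnb u x (l r - 1) ∧ ∀ i < l r - 1, ⁅lnb u x i, y⁆ = 0 := by
  rcases hr.eq_or_lt with rfl | hr
  · exact ⟨y, hseq.l_one ▸ hseq.v_one, hseq.l_one ▸ hsetup.first_const⟩
  · exact ⟨⁅v (r - 1), y⁆, hseq.v_def r hr, hseq.const r hr⟩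

lemma exists_lnb_eq_of_le (hseq : ConstituentSeq x y ℓ l v) (hsetup : MaxClassSetup Lc x y ℓ)
    {r k : ℕ} (hr : 1 ≤ r) (hk : k ≤ l r - 1) :
    ∃ s, lnb s x k = v r ∧ ∀ i < k, ⁅lnb s x i, y⁆ = 0 := by
  obtain ⟨u, hv, hu⟩ := hseq.exists_lnb_eq hsetup hr
  refine ⟨lnb u x (l r - 1 - k), ?_, fun i hi => ?_⟩
  · rw [← lnb_add, Nat.sub_add_cancel hk, hv]
  · rw [← lnb_add]
    exact hu _ (by omega)

lemma exists_lie_eq_smul_lie (hseq : ConstituentSeq x y ℓ l v) (hL : IsMaxClassGrading F L Lc)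
    (hsetup : MaxClassSetup Lc x y ℓ) {r : ℕ} (hr : 1 ≤ r) :
    ∃ c : F, ⁅v r, x⁆ = c • ⁅v r, y⁆ := by
  obtain ⟨d, hd, hv⟩ := hseq.exists_mem hL hsetup hr
  exact hL.exists_lie_eq_smul_lie hd hv hsetup.x_mem hsetup.y_mem (hseq.lie_ne_zero hsetup hr)

theorem length_succ_le (hseq : ConstituentSeq x y ℓ l v) (hL : IsMaxClassGrading F L Lc)
    (hsetup : MaxClassSetup Lc x y ℓ) {r : ℕ} (hr : 1 ≤ r) : l (r + 1) ≤ ℓ := by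
  by_contra! hlt
  obtain ⟨c, hc⟩ := hseq.exists_lie_eq_smul_lie hL hsetup hr
  have hzero := lnb_lie_eq_zero_of_lnb_eq_zero hc (hseq.lie_lnb_lie_eq_zero hr)
    hsetup.normalized (by omega)
  apply hseq.lie_lnb_lie_ne_zero hr
  rw [← Nat.add_sub_cancel' (by omega : ℓ ≤ l (r + 1) - 1), lnb_add, hzero, lnb_zero_left,
    zero_lie]

theorem dvd_choose (hseq : ConstituentSeq x y ℓ l v) (hL : IsMaxClassGrading F L Lc)
    (hsetup : MaxClassSetup Lc x y ℓ) {p : ℕ} [CharP F p] {r k : ℕ} (hr : 1 ≤ r) (hk : 0 < k)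
    (hkℓ : l (r + 1) + k < ℓ) (hkr : k < l r) :
    p ∣ (l (r + 1) - 1 + k).choose k := by
  obtain ⟨c, hc⟩ := hseq.exists_lie_eq_smul_lie hL hsetup hr
  obtain ⟨s, hsv, hs⟩ := hseq.exists_lnb_eq_of_le hsetup hr (k := k) (by omega)
  have hpos := hseq.l_pos (r + 1) (by omega)
  rw [← CharP.cast_eq_zero_iff F p]
  exact choose_eq_zero_of_lie_lnb_eq_zero hc (hseq.lie_lnb_lie_eq_zero hr)
    (hseq.lie_lnb_lie_ne_zero hr) hs hsv hk (hsetup.first_const _ (by omega))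

end ConstituentSeq

/-- Theorem 3.3: if the first constituent has length `2q`, `q` a power of the
characteristic `p`, then every constituent length equals `2q` or `2q − p^s` with
`p^s ≤ q`. -/
theorem constituent_lengths {F : Type*} [Field F] {L : Type*} [LieRing L] [LieAlgebra F L]
    (p : ℕ) (hp : p.Prime) (hchar : CharP F p)
    (Lc : ℕ → Submodule F L) (hL : IsMaxClassGrading F L Lc)
    (x y : L) (ℓ q : ℕ) (hq : ∃ m : ℕ, q = p ^ m) (hℓq : ℓ = 2 * q)
    (hsetup : MaxClassSetup Lc x y ℓ)
    (l : ℕ → ℕ) (v : ℕ → L) (hseq : ConstituentSeq x y ℓ l v) :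
    ∀ r : ℕ, 1 ≤ r → l r = 2 * q ∨ ∃ s : ℕ, p ^ s ≤ q ∧ l r = 2 * q - p ^ s := by
  obtain ⟨m, hm⟩ := hq
  intro r hr
  induction r, hr using Nat.le_induction with
  | base => exact Or.inl (hseq.l_one.trans hℓq)
  | succ r hr ih =>
    have hqr : q ≤ l r := by rcases ih with h | ⟨_, _, h⟩ <;> omega
    subst hℓq
    exact eq_two_mul_or_eq_two_mul_sub_pow_of_dvd_choose hp hm (hseq.l_pos _ (by omega))
      (hseq.length_succ_le hL hsetup hr) fun k hk hkℓ hkq =>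
        hseq.dvd_choose hL hsetup hr hk hkℓ (by omega)
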